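/- Let y(r) := (max(q^{1-β} − (1−β)∫_s^r h(τ)dτ, 0))^{1/(1-β)} for 0 < β < 1, q ≥ 0, and h ∈ L¹([s,t]) nonnegative. Then y is the unique nonnegative absolutely continuous solution on [s,t] of y'(r) = −h(r)·y(r)^β with y(s) = q. -/

import Mathlib

open MeasureTheory Set intervalIntegral Filter Topology

/-!
The candidate is `G ∘ H` with `H r = ∫_s^r h` and `G u = max (q^(1-β) - (1-β) u) 0 ^ (1/(1-β))`.
Because the exponent `1/(1-β)` exceeds `1`, `G` is `C¹` on all of `ℝ`, flat part included, and
solves the autonomous equation `G' = -G^β`. Hence `G ∘ H` is absolutely continuous, and at every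
Lebesgue point of `h` the chain rule gives `(G ∘ H)' = -h (G ∘ H)^β`; integrating yields existence.

Uniqueness holds because `v ↦ -h v^β` is nonincreasing on `[0, ∞)`. If `z > y` at `x`, let `r₁` be
the last point of `[s, x]` where `z ≤ y`. On `(r₁, x)` we have `z > y ≥ 0`, so `h z^β ≥ h y^β`,
and `z - y` cannot increase from `r₁` to `x`.
-/

theorem hasDerivAt_max_zero_rpow {p : ℝ} (hp : 1 < p) (v : ℝ) :
    HasDerivAt (fun v : ℝ => max v 0 ^ p) (p * max v 0 ^ (p - 1)) v := by
  have hp0 : p ≠ 0 := by positivity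
  have hp1 : p - 1 ≠ 0 := by linarith
  rcases lt_trichotomy v 0 with hv | rfl | hv
  · have : (fun v : ℝ => max v 0 ^ p) =ᶠ[𝓝 v] fun _ => 0 := by
      filter_upwards [Iio_mem_nhds hv] with w hw
      simp [max_eq_right (le_of_lt (show w < 0 from hw)), Real.zero_rpow hp0]
    simpa [max_eq_right hv.le, Real.zero_rpow hp1] using
      (hasDerivAt_const v (0 : ℝ)).congr_of_eventuallyEq this
  · have hleft : HasDerivWithinAt (fun v : ℝ => max v 0 ^ p) 0 (Iic 0) 0 :=
      (hasDerivWithinAt_const 0 _ (0 : ℝ)).congr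
        (fun w hw => by simp [max_eq_right (show w ≤ 0 from hw), Real.zero_rpow hp0])
        (by simp [Real.zero_rpow hp0])
    have hright : HasDerivWithinAt (fun v : ℝ => max v 0 ^ p) 0 (Ici 0) 0 := by
      have := (Real.hasDerivAt_rpow_const (x := 0) (Or.inr hp.le)).hasDerivWithinAt (s := Ici 0)
      rw [Real.zero_rpow hp1, mul_zero] at this
      exact this.congr (fun w hw => by simp [max_eq_left (show 0 ≤ w from hw)]) (by simp)
    have := hleft.union hright
    rw [Iic_union_Ici, hasDerivWithinAt_univ] at this
    simpa [Real.zero_rpow hp1] using this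
  · have : (fun v : ℝ => max v 0 ^ p) =ᶠ[𝓝 v] fun w => w ^ p := by
      filter_upwards [Ioi_mem_nhds hv] with w hw
      rw [max_eq_left hw.le]
    simpa [max_eq_left hv.le] using
      (Real.hasDerivAt_rpow_const (Or.inl hv.ne')).congr_of_eventuallyEq this

theorem LipschitzOnWith.comp_absolutelyContinuousOnInterval {X Y : Type*} [PseudoMetricSpace X]
    [PseudoMetricSpace Y] {g : X → Y} {K : NNReal} {u : Set X} (hg : LipschitzOnWith K g u)
    {f : ℝ → X} {a b : ℝ} (hf : AbsolutelyContinuousOnInterval f a b)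
    (hfu : MapsTo f (uIcc a b) u) : AbsolutelyContinuousOnInterval (g ∘ f) a b := by
  unfold AbsolutelyContinuousOnInterval at hf ⊢
  refine squeeze_zero' (Eventually.of_forall fun E => Finset.sum_nonneg fun _ _ => dist_nonneg)
    ?_ (mul_zero (K : ℝ) ▸ hf.const_mul (K : ℝ))
  filter_upwards [mem_inf_of_right (mem_principal_self _)] with E hE
  rw [Finset.mul_sum]
  exact Finset.sum_le_sum fun i hi => hg.dist_le_mul _ (hfu (hE.1 i hi).1) _ (hfu (hE.1 i hi).2)

theorem ContDiff.comp_absolutelyContinuousOnInterval {E : Type*} [NormedAddCommGroup E]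
    [NormedSpace ℝ E] {g : ℝ → E} (hg : ContDiff ℝ 1 g) {f : ℝ → ℝ} {a b : ℝ}
    (hf : AbsolutelyContinuousOnInterval f a b) : AbsolutelyContinuousOnInterval (g ∘ f) a b := by
  obtain ⟨R, hR⟩ :=
    (isCompact_uIcc.image_of_continuousOn hf.continuousOn).isBounded.subset_closedBall 0
  obtain ⟨K, hK⟩ := hg.contDiffOn.exists_lipschitzOnWith one_ne_zero (convex_closedBall 0 R)
    (isCompact_closedBall 0 R)
  exact hK.comp_absolutelyContinuousOnInterval hf (mapsTo_iff_image_subset.mpr hR)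

theorem integral_deriv_comp_primitive_mul {G : ℝ → ℝ} (hG : ContDiff ℝ 1 G) {h : ℝ → ℝ}
    {a b : ℝ} (hh : IntervalIntegrable h volume a b) :
    ∫ x in a..b, deriv G (∫ t in a..x, h t) * h x = G (∫ t in a..b, h t) - G 0 := by
  have hAC := hG.comp_absolutelyContinuousOnInterval
    (hh.absolutelyContinuousOnInterval_intervalIntegral left_mem_uIcc)
  have hFTC := hAC.integral_deriv_eq_sub
  simp only [Function.comp_apply, integral_same] at hFTC
  rw [← hFTC]
  refine integral_congr_ae ?_
  filter_upwards [hh.ae_hasDerivAt_integral] with x hx hxab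
  have hH := hx (uIoc_subset_uIcc hxab) a left_mem_uIcc
  exact ((hG.differentiable one_ne_zero).differentiableAt.hasDerivAt.comp x hH).deriv.symm

noncomputable def extinctionProfile (β c u : ℝ) : ℝ := max (c - (1 - β) * u) 0 ^ (1 / (1 - β))

section extinctionProfile

variable {β : ℝ}

theorem hasDerivAt_extinctionProfile (hβ0 : 0 < β) (hβ1 : β < 1) (c u : ℝ) :
    HasDerivAt (extinctionProfile β c) (-extinctionProfile β c u ^ β) u := by
  have hβ : 1 - β ≠ 0 := by linarith
  have hp : 1 < 1 / (1 - β) := by rw [lt_div_iff₀ (by linarith)]; linarith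
  have hlin := ((hasDerivAt_id u).const_mul (1 - β)).const_sub c
  refine ((hasDerivAt_max_zero_rpow hp _).comp u hlin).congr_deriv ?_
  have hexp : 1 / (1 - β) * β = 1 / (1 - β) - 1 := by field_simp; ring
  rw [extinctionProfile, ← Real.rpow_mul (le_max_right _ _), hexp, id]
  field_simp

theorem deriv_extinctionProfile (hβ0 : 0 < β) (hβ1 : β < 1) (c : ℝ) :
    deriv (extinctionProfile β c) = fun u => -extinctionProfile β c u ^ β :=
  funext fun u => (hasDerivAt_extinctionProfile hβ0 hβ1 c u).deriv

theorem contDiff_extinctionProfile (hβ0 : 0 < β) (hβ1 : β < 1) (c : ℝ) :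
    ContDiff ℝ 1 (extinctionProfile β c) := by
  have hdiff : Differentiable ℝ (extinctionProfile β c) := fun u =>
    (hasDerivAt_extinctionProfile hβ0 hβ1 c u).differentiableAt
  rw [contDiff_one_iff_deriv, deriv_extinctionProfile hβ0 hβ1]
  exact ⟨hdiff, (hdiff.continuous.rpow_const fun _ => Or.inr hβ0.le).neg⟩

theorem extinctionProfile_rpow_zero (hβ1 : β < 1) {q : ℝ} (hq : 0 ≤ q) :
    extinctionProfile β (q ^ (1 - β)) 0 = q := by
  rw [extinctionProfile, mul_zero, sub_zero, max_eq_left (by positivity), ← Real.rpow_mul hq,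
    mul_one_div_cancel (by linarith), Real.rpow_one]

theorem extinctionProfile_comp_primitive_eq (hβ0 : 0 < β) (hβ1 : β < 1) {h : ℝ → ℝ} {s r q : ℝ}
    (hh : IntervalIntegrable h volume s r) (hq : 0 ≤ q) :
    extinctionProfile β (q ^ (1 - β)) (∫ τ in s..r, h τ) =
      q - ∫ τ in s..r, h τ * extinctionProfile β (q ^ (1 - β)) (∫ σ in s..τ, h σ) ^ β := by
  have := integral_deriv_comp_primitive_mul (contDiff_extinctionProfile hβ0 hβ1 (q ^ (1 - β))) hh
  simp only [deriv_extinctionProfile hβ0 hβ1, extinctionProfile_rpow_zero hβ1 hq, neg_mul,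
    intervalIntegral.integral_neg] at this
  simp only [mul_comm (h _)]
  linarith

end extinctionProfile

theorem sub_eq_neg_integral_of_eq_sub_integral {w g : ℝ → ℝ} {s t q a b : ℝ}
    (hg : IntervalIntegrable g volume s t) (hw : ∀ r ∈ Icc s t, w r = q - ∫ τ in s..r, g τ)
    (ha : a ∈ Icc s t) (hb : b ∈ Icc s t) : w b - w a = -∫ τ in a..b, g τ := by
  rw [hw a ha, hw b hb, ← integral_interval_sub_left
    (hg.mono_set (uIcc_subset_uIcc_left (Icc_subset_uIcc hb)))
    (hg.mono_set (uIcc_subset_uIcc_left (Icc_subset_uIcc ha)))]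
  ring

section comparison

variable {φ h y z : ℝ → ℝ} {s t q : ℝ}

theorem le_of_eq_sub_integral (hφ : MonotoneOn φ (Ici 0)) (hφc : ContinuousOn φ (Ici 0))
    (hh : IntervalIntegrable h volume s t) (hh0 : ∀ r ∈ Icc s t, 0 ≤ h r)
    (hy : ContinuousOn y (Icc s t)) (hz : ContinuousOn z (Icc s t))
    (hy0 : ∀ r ∈ Icc s t, 0 ≤ y r) (hz0 : ∀ r ∈ Icc s t, 0 ≤ z r)
    (hyeq : ∀ r ∈ Icc s t, y r = q - ∫ τ in s..r, h τ * φ (y τ))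
    (hzeq : ∀ r ∈ Icc s t, z r = q - ∫ τ in s..r, h τ * φ (z τ)) :
    ∀ r ∈ Icc s t, z r ≤ y r := by
  intro x hx
  by_contra! hlt
  have hst : s ≤ t := hx.1.trans hx.2
  have hint : ∀ w : ℝ → ℝ, ContinuousOn w (Icc s t) → (∀ r ∈ Icc s t, 0 ≤ w r) →
      IntervalIntegrable (fun τ => h τ * φ (w τ)) volume s t := fun w hw hw0 =>
    hh.mul_continuousOn (uIcc_of_le hst ▸ hφc.comp hw hw0)
  set K := Icc s x ∩ (fun u => z u - y u) ⁻¹' Iic 0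
  have hxt : Icc s x ⊆ Icc s t := Icc_subset_Icc_right hx.2
  have hK : IsCompact K := isCompact_Icc.of_isClosed_subset
    (((hz.sub hy).mono hxt).preimage_isClosed_of_isClosed isClosed_Icc isClosed_Iic)
    inter_subset_left
  have hsK : s ∈ K := ⟨⟨le_rfl, hx.1⟩, by simp [hyeq s ⟨le_rfl, hst⟩, hzeq s ⟨le_rfl, hst⟩]⟩
  obtain ⟨⟨hr1s, hr1x⟩, hr1⟩ : sSup K ∈ K := hK.sSup_mem ⟨s, hsK⟩
  set r1 := sSup K
  have hr1t : r1 ∈ Icc s t := hxt ⟨hr1s, hr1x⟩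
  have hyz : ∀ τ ∈ Ioo r1 x, y τ ≤ z τ := fun τ hτ => by
    by_contra! hτK
    exact hτ.1.not_ge (le_csSup hK.bddAbove ⟨⟨hr1s.trans hτ.1.le, hτ.2.le⟩, by simpa using hτK.le⟩)
  have hsub : uIcc r1 x ⊆ uIcc s t := uIcc_subset_uIcc (Icc_subset_uIcc hr1t) (Icc_subset_uIcc hx)
  have hmono : ∫ τ in r1..x, h τ * φ (y τ) ≤ ∫ τ in r1..x, h τ * φ (z τ) :=
    integral_mono_on_of_le_Ioo hr1x ((hint y hy hy0).mono_set hsub)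
      ((hint z hz hz0).mono_set hsub) fun τ hτ =>
        have hτt : τ ∈ Icc s t := hxt ⟨hr1s.trans hτ.1.le, hτ.2.le⟩
        mul_le_mul_of_nonneg_left (hφ (hy0 τ hτt) (hz0 τ hτt) (hyz τ hτ)) (hh0 τ hτt)
  have hr1_le : z r1 - y r1 ≤ 0 := hr1
  linarith [sub_eq_neg_integral_of_eq_sub_integral (hint y hy hy0) hyeq hr1t hx,
    sub_eq_neg_integral_of_eq_sub_integral (hint z hz hz0) hzeq hr1t hx]

theorem eqOn_of_eq_sub_integral (hφ : MonotoneOn φ (Ici 0)) (hφc : ContinuousOn φ (Ici 0))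
    (hh : IntervalIntegrable h volume s t) (hh0 : ∀ r ∈ Icc s t, 0 ≤ h r)
    (hy : ContinuousOn y (Icc s t)) (hz : ContinuousOn z (Icc s t))
    (hy0 : ∀ r ∈ Icc s t, 0 ≤ y r) (hz0 : ∀ r ∈ Icc s t, 0 ≤ z r)
    (hyeq : ∀ r ∈ Icc s t, y r = q - ∫ τ in s..r, h τ * φ (y τ))
    (hzeq : ∀ r ∈ Icc s t, z r = q - ∫ τ in s..r, h τ * φ (z τ)) :
    EqOn z y (Icc s t) := fun r hr =>
  le_antisymm (le_of_eq_sub_integral hφ hφc hh hh0 hy hz hy0 hz0 hyeq hzeq r hr)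
    (le_of_eq_sub_integral hφ hφc hh hh0 hz hy hz0 hy0 hzeq hyeq r hr)

end comparison

theorem singular_ODE_unique_solution_general
    (β s t q : ℝ) (hβ0 : 0 < β) (hβ1 : β < 1) (hq : 0 ≤ q)
    (h : ℝ → ℝ)
    (hh_int : IntervalIntegrable h volume s t)
    (hh_nonneg : ∀ r ∈ Icc s t, 0 ≤ h r) :
    -- `y` is a nonnegative solution in integral form:
    (∀ r ∈ Icc s t,
        (0 : ℝ) ≤ (max (q ^ (1 - β) - (1 - β) * ∫ τ in s..r, h τ) 0) ^ (1/(1 - β)) ∧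
        (max (q ^ (1 - β) - (1 - β) * ∫ τ in s..r, h τ) 0) ^ (1/(1 - β))
          = q - ∫ τ in s..r,
              h τ * ((max (q ^ (1 - β) - (1 - β) * ∫ σ in s..τ, h σ) 0) ^ (1/(1 - β))) ^ β)
    ∧
    -- and it is the unique such solution:
    (∀ z : ℝ → ℝ, ContinuousOn z (Icc s t) → (∀ r ∈ Icc s t, 0 ≤ z r) →
      (∀ r ∈ Icc s t, z r = q - ∫ τ in s..r, h τ * (z τ) ^ β) →
      ∀ r ∈ Icc s t,
        z r = (max (q ^ (1 - β) - (1 - β) * ∫ τ in s..r, h τ) 0) ^ (1/(1 - β))) := by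
  have hsub : ∀ r ∈ Icc s t, IntervalIntegrable h volume s r := fun r hr =>
    hh_int.mono_set <| by
      rw [uIcc_of_le hr.1, uIcc_of_le (hr.1.trans hr.2)]; exact Icc_subset_Icc_right hr.2
  have hsol : ∀ r ∈ Icc s t, extinctionProfile β (q ^ (1 - β)) (∫ τ in s..r, h τ) =
      q - ∫ τ in s..r, h τ * extinctionProfile β (q ^ (1 - β)) (∫ σ in s..τ, h σ) ^ β :=
    fun r hr => extinctionProfile_comp_primitive_eq hβ0 hβ1 (hsub r hr) hq
  refine ⟨fun r hr => ⟨Real.rpow_nonneg (le_max_right _ _) _, hsol r hr⟩,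
    fun z hz hz0 hzeq => ?_⟩
  have hy : ContinuousOn (fun r => extinctionProfile β (q ^ (1 - β)) (∫ τ in s..r, h τ))
      (Icc s t) :=
    (contDiff_extinctionProfile hβ0 hβ1 _).continuous.comp_continuousOn
      ((hh_int.absolutelyContinuousOnInterval_intervalIntegral left_mem_uIcc).continuousOn.mono
        Icc_subset_uIcc)
  exact eqOn_of_eq_sub_integral (Real.monotoneOn_rpow_Ici_of_exponent_nonneg hβ0.le)
    (Real.continuous_rpow_const hβ0.le).continuousOn hh_int hh_nonneg hy hz
    (fun r hr => Real.rpow_nonneg (le_max_right _ _) _) hz0 hsol hzeq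

/-- `y(r) = (max(q^{1-β} - (1-β)∫_s^r h, 0))^{1/(1-β)}` is the unique nonnegative
(absolutely continuous, here in integral form) solution of `y' = -h(r) y^β`, `y(s) = q`. -/
theorem singular_ODE_unique_solution
    (β s t q : ℝ) (hβ0 : 0 < β) (hβ1 : β < 1) (hst : s ≤ t) (hq : 0 ≤ q)
    (h : ℝ → ℝ)
    (hh_int : IntervalIntegrable h volume s t)
    (hh_nonneg : ∀ r ∈ Icc s t, 0 ≤ h r) :
    -- `y` is a nonnegative solution in integral form:
    (∀ r ∈ Icc s t,
        (0 : ℝ) ≤ (max (q ^ (1 - β) - (1 - β) * ∫ τ in s..r, h τ) 0) ^ (1/(1 - β)) ∧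
        (max (q ^ (1 - β) - (1 - β) * ∫ τ in s..r, h τ) 0) ^ (1/(1 - β))
          = q - ∫ τ in s..r,
              h τ * ((max (q ^ (1 - β) - (1 - β) * ∫ σ in s..τ, h σ) 0) ^ (1/(1 - β))) ^ β)
    ∧
    -- and it is the unique such solution:
    (∀ z : ℝ → ℝ, ContinuousOn z (Icc s t) → (∀ r ∈ Icc s t, 0 ≤ z r) →
      (∀ r ∈ Icc s t, z r = q - ∫ τ in s..r, h τ * (z τ) ^ β) →
      ∀ r ∈ Icc s t,
        z r = (max (q ^ (1 - β) - (1 - β) * ∫ τ in s..r, h τ) 0) ^ (1/(1 - β))) :=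
  singular_ODE_unique_solution_general β s t q hβ0 hβ1 hq h hh_int hh_nonneg
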